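/- Define m(ν) := Σ_{j=1}^{L₁+l₂} 1/γ_j(ν) (which, by the Karlin–McGregor/Keilson theorem, equals the mean transition time E T_{−L₁, l₂}(ν) of the bipartite chain from state −L₁ to the absorbing state l₂). Then lim_{ν→∞} γ_1(ν)·m(ν) = 1, and lim_{ν→∞} γ_i(ν)·m(ν) = ∞ for every i = 2, …, L₁+l₂. -/

import Mathlib

/-!
Write `B(ν) = ν C + D`, where the row of `C` at the state `−L₁` vanishes. Then
`p_ν(t) := det (t + B(ν)) = ∏ⱼ (t + γⱼ(ν))` is `ν^(n-1)` times a continuous function of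
`(t, 1/ν)`, and `(p_ν(1) − p_ν(0)) / ν^(n-1)` tends to the principal minor of `C` at `−L₁`, which
is positive because it is block triangular with positive diagonal. So `p_ν(1) − p_ν(0)` and
`p_ν(1)` are both of exact order `ν^(n-1)`. Bernoulli's inequality gives
`(1 + γ₁)(p_ν(1) − p_ν(0)) ≤ n p_ν(1)`, so `γ₁` stays bounded. Every eigenvalue is at most
`‖B(ν)‖ = O(ν)`, so `p_ν(1) ≤ (1 + γ₁)(1 + γᵢ) O(ν^(n-2))` forces `γᵢ ≳ ν` for `i ≥ 2`. Hence
`γ₁ m = Σⱼ γ₁/γⱼ → 1` and `γᵢ m ≥ γᵢ/γ₁ → ∞`.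
-/

open Filter

/-- The `(L₁+l₂)×(L₁+l₂)` matrix `B(ν)`: the negative of the generator,
restricted to the transient states `{−L₁,…,−1,0,1,…,l₂−1}`, of the bipartite
birth–death chain on `{−L₁,…,L₂}` with rates `q(l,l+1) = |l|` for `l < 0`,
`q(l,l+1) = (L₂−l)ν` for `l ≥ 0`, `q(l,l−1) = (L₁−|l|)ν` for `l ≤ 0`,
`q(l,l−1) = l` for `l > 0`, in which state `l₂` is made absorbing.
Index `i : Fin (L₁ + l₂)` represents the state `s = i − L₁ ∈ {−L₁,…,l₂−1}`. -/
noncomputable def bipAbsorbMat (L₁ L₂ l₂ : ℕ) (ν : ℝ) :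
    Matrix (Fin (L₁ + l₂)) (Fin (L₁ + l₂)) ℝ :=
  Matrix.of fun i j =>
    let s : ℤ := (i : ℕ) - (L₁ : ℤ)
    let t : ℤ := (j : ℕ) - (L₁ : ℤ)
    if s < 0 then
      if t = s then ((L₁ : ℝ) - (s.natAbs : ℝ)) * ν + (s.natAbs : ℝ)
      else if t = s + 1 then -((s.natAbs : ℝ))
      else if t = s - 1 then -(((L₁ : ℝ) - (s.natAbs : ℝ)) * ν)
      else 0
    else if s = 0 then
      if t = 0 then ((L₁ : ℝ) + (L₂ : ℝ)) * ν
      else if t = -1 then -((L₁ : ℝ) * ν)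
      else if t = 1 then -((L₂ : ℝ) * ν)
      else 0
    else
      if t = s then ((L₂ : ℝ) - (s : ℝ)) * ν + (s : ℝ)
      else if t = s - 1 then -((s : ℤ) : ℝ)
      else if t = s + 1 then -(((L₂ : ℝ) - (s : ℝ)) * ν)
      else 0

open Topology Matrix Finset

namespace Matrix
variable {ι : Type*} [Fintype ι] [DecidableEq ι]

open Polynomial in
theorem charpoly_eq_prod_X_sub_C {K : Type*} [Field K] {M : Matrix ι ι K} {γ : ι → K}
    (hγ : Function.Injective γ) (hspec : Set.range γ ⊆ spectrum K M) :
    M.charpoly = ∏ j, (X - C (γ j)) := by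
  have hle : Finset.univ.val.map γ ≤ M.charpoly.roots := by
    rw [Multiset.le_iff_subset (Finset.univ.nodup.map hγ)]
    rintro _ hx
    obtain ⟨j, -, rfl⟩ := Multiset.mem_map.1 hx
    rw [mem_roots M.charpoly_monic.ne_zero, ← mem_spectrum_iff_isRoot_charpoly]
    exact hspec ⟨j, rfl⟩
  have hdvd := (Multiset.prod_X_sub_C_dvd_iff_le_roots M.charpoly_monic.ne_zero _).2 hle
  rw [Multiset.map_map] at hdvd
  refine eq_of_monic_of_dvd_of_natDegree_le (monic_prod_of_monic _ _ fun j _ => monic_X_sub_C _)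
    M.charpoly_monic hdvd ?_
  rw [natDegree_prod_of_monic _ _ fun j _ => monic_X_sub_C _, M.charpoly_natDegree_eq_dim]
  simp

theorem det_smul_one_add_eq_prod {K : Type*} [Field K] {M : Matrix ι ι K} {γ : ι → K}
    (hγ : Function.Injective γ) (hspec : Set.range γ ⊆ spectrum K M) (t : K) :
    (t • (1 : Matrix ι ι K) + M).det = ∏ j, (t + γ j) := by
  have h := congrArg (Polynomial.eval (-t)) (charpoly_eq_prod_X_sub_C hγ hspec)
  rw [eval_charpoly, Polynomial.eval_prod] at h
  have hneg : t • (1 : Matrix ι ι K) + M = -(scalar ι (-t) - M) := by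
    rw [neg_sub, scalar_apply, ← smul_one_eq_diagonal, neg_smul, sub_neg_eq_add, add_comm]
  rw [hneg, det_neg, h, Fintype.card, ← Finset.prod_const, ← Finset.prod_mul_distrib]
  simp [add_comm]

theorem det_smul_add_of_row_eq_zero {R : Type*} [Field R] {C D : Matrix ι ι R} {i₀ : ι}
    (hC : C i₀ = 0) {ν : R} (hν : ν ≠ 0) :
    (ν • C + D).det = ν ^ (Fintype.card ι - 1) * (updateRow (C + ν⁻¹ • D) i₀ (D i₀)).det := by
  have h : ν • C + D = updateRow (ν • (C + ν⁻¹ • D)) i₀ (D i₀) := by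
    ext i j
    rcases eq_or_ne i i₀ with rfl | hi
    · simp [hC]
    · simp [hi, smul_smul, hν]
  rw [h, det_updateRow_smul_left]

theorem tendsto_det_smul_add_div_pow {C D : Matrix ι ι ℝ} {i₀ : ι} (hC : C i₀ = 0) :
    Tendsto (fun ν : ℝ => (ν • C + D).det / ν ^ (Fintype.card ι - 1)) atTop
      (𝓝 (updateRow C i₀ (D i₀)).det) := by
  have hcont : Continuous fun ε : ℝ => (updateRow (C + ε • D) i₀ (D i₀)).det :=
    ((continuous_const.add (continuous_id.smul continuous_const)).matrix_updateRow i₀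
      continuous_const).matrix_det
  have h := (hcont.tendsto 0).comp tendsto_inv_atTop_zero
  simp only [zero_smul, add_zero] at h
  refine h.congr' ?_
  filter_upwards [eventually_gt_atTop 0] with ν hν
  rw [Function.comp_apply, det_smul_add_of_row_eq_zero hC hν.ne',
    mul_div_cancel_left₀ _ (pow_pos hν _).ne']

theorem det_updateRow_one_add {R : Type*} [CommRing R] (C D : Matrix ι ι R) (i₀ : ι) :
    (updateRow C i₀ ((1 + D) i₀)).det
      = (updateRow C i₀ (Pi.single i₀ 1)).det + (updateRow C i₀ (D i₀)).det := by
  have hrow : (1 + D) i₀ = Pi.single i₀ 1 + D i₀ := by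
    ext j
    simp [one_apply, Pi.single_apply, eq_comm]
  rw [hrow, det_updateRow_add]

theorem exists_le_mul_of_mem_spectrum_smul_add (C D : Matrix ι ι ℝ) :
    ∃ R, 0 ≤ R ∧ ∀ ν ≥ 1, ∀ x ∈ spectrum ℝ (ν • C + D), x ≤ R * ν := by
  let := Matrix.linftyOpNormedRing (n := ι) (α := ℝ)
  let := Matrix.linftyOpNormedAlgebra (n := ι) (R := ℝ) (α := ℝ)
  refine ⟨(‖C‖ + ‖D‖) * ‖(1 : Matrix ι ι ℝ)‖, by positivity, fun ν hν x hx => ?_⟩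
  have hnorm : ‖ν • C + D‖ ≤ (‖C‖ + ‖D‖) * ν := calc
    ‖ν • C + D‖ ≤ ν * ‖C‖ + ‖D‖ := by
      grw [norm_add_le, norm_smul, Real.norm_of_nonneg (by linarith)]
    _ ≤ (‖C‖ + ‖D‖) * ν := by nlinarith [norm_nonneg C, norm_nonneg D]
  calc x ≤ ‖x‖ := Real.le_norm_self x
    _ ≤ ‖ν • C + D‖ * ‖(1 : Matrix ι ι ℝ)‖ := spectrum.norm_le_norm_mul_of_mem hx
    _ ≤ (‖C‖ + ‖D‖) * ν * ‖(1 : Matrix ι ι ℝ)‖ := by gcongr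
    _ = (‖C‖ + ‖D‖) * ‖(1 : Matrix ι ι ℝ)‖ * ν := mul_right_comm _ _ _

end Matrix

theorem one_add_mul_prod_one_add_sub_prod_le {ι : Type*} [Fintype ι] {γ : ι → ℝ} {m : ℝ}
    (hm : 0 < m) (hγ : ∀ j, m ≤ γ j) :
    (1 + m) * (∏ j, (1 + γ j) - ∏ j, γ j) ≤ Fintype.card ι * ∏ j, (1 + γ j) := by
  set P := ∏ j, (1 + γ j)
  have hP : 0 < P := prod_pos fun j _ => by linarith [hγ j]
  have hratio : (m / (1 + m)) ^ Fintype.card ι ≤ (∏ j, γ j) / P := by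
    rw [← prod_div_distrib, ← card_univ, ← prod_const]
    refine prod_le_prod (fun _ _ => by positivity) fun j _ => ?_
    rw [div_le_div_iff₀ (by positivity) (by linarith [hγ j])]
    nlinarith [hγ j]
  have hbernoulli : 1 - Fintype.card ι / (1 + m) ≤ (m / (1 + m)) ^ Fintype.card ι := by
    have h := one_add_mul_le_pow (a := -(1 + m)⁻¹)
      (by have := inv_le_one_of_one_le₀ (by linarith : (1 : ℝ) ≤ 1 + m); linarith) (Fintype.card ι)
    rw [show (1 : ℝ) + -(1 + m)⁻¹ = m / (1 + m) by field_simp; ring] at h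
    linarith [div_eq_mul_inv (Fintype.card ι : ℝ) (1 + m)]
  calc (1 + m) * (P - ∏ j, γ j) = (1 + m) * P * (1 - (∏ j, γ j) / P) := by field_simp
    _ ≤ (1 + m) * P * (Fintype.card ι / (1 + m)) := by gcongr; linarith
    _ = Fintype.card ι * P := by field_simp

theorem prod_le_mul_mul_pow {ι : Type*} [Fintype ι] [DecidableEq ι] {f : ι → ℝ} {r : ℝ}
    (hf : ∀ j, 0 ≤ f j) (hr : ∀ j, f j ≤ r) {i₁ i₂ : ι} (hi : i₁ ≠ i₂) :
    ∏ j, f j ≤ f i₁ * f i₂ * r ^ (Fintype.card ι - 2) := by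
  rw [← prod_sdiff (subset_univ {i₁, i₂}), prod_pair hi, mul_comm]
  gcongr
  · exact mul_nonneg (hf _) (hf _)
  · calc ∏ j ∈ univ \ {i₁, i₂}, f j ≤ ∏ j ∈ univ \ {i₁, i₂}, r :=
          prod_le_prod (fun j _ => hf j) fun j _ => hr j
      _ = r ^ (Fintype.card ι - 2) := by
          rw [prod_const, card_sdiff_of_subset (subset_univ _), card_pair hi, card_univ]

section Asymptotics

variable {n : ℕ} {γ : ℝ → Fin n → ℝ}

theorem exists_eventually_le_of_tendsto_prod (h0 : 0 < n)
    (hγ : ∀ᶠ ν in atTop, Monotone (γ ν) ∧ ∀ j, 0 < γ ν j) {a b : ℝ} (ha : 0 < a)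
    (hdiff : Tendsto (fun ν => (∏ j, (1 + γ ν j) - ∏ j, γ ν j) / ν ^ (n - 1)) atTop (𝓝 a))
    (hone : Tendsto (fun ν => (∏ j, (1 + γ ν j)) / ν ^ (n - 1)) atTop (𝓝 b)) :
    ∃ K, ∀ᶠ ν in atTop, γ ν ⟨0, h0⟩ ≤ K := by
  refine ⟨2 * n * (b + 1) / a, ?_⟩
  filter_upwards [hγ, hdiff.eventually (lt_mem_nhds (half_lt_self ha)),
    hone.eventually (gt_mem_nhds (lt_add_one b)), eventually_gt_atTop 0]
    with ν ⟨hmono, hpos⟩ hY hX hν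
  have hA := one_add_mul_prod_one_add_sub_prod_le (γ := γ ν) (hpos ⟨0, h0⟩)
    fun j => hmono (Fin.le_def.2 (Nat.zero_le _))
  rw [Fintype.card_fin] at hA
  have hscaled : (1 + γ ν ⟨0, h0⟩) * ((∏ j, (1 + γ ν j) - ∏ j, γ ν j) / ν ^ (n - 1))
      ≤ n * ((∏ j, (1 + γ ν j)) / ν ^ (n - 1)) := by
    rw [← mul_div_assoc, ← mul_div_assoc]
    exact div_le_div_of_nonneg_right hA (by positivity)
  rw [le_div_iff₀ ha]
  nlinarith [hpos ⟨0, h0⟩, (Nat.cast_nonneg n : (0 : ℝ) ≤ n)]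

theorem tendsto_atTop_of_tendsto_prod (hpos : ∀ᶠ ν in atTop, ∀ j, 0 < γ ν j) {b : ℝ} (hb : 0 < b)
    (hone : Tendsto (fun ν => (∏ j, (1 + γ ν j)) / ν ^ (n - 1)) atTop (𝓝 b))
    {K R : ℝ} (hR : 0 ≤ R) (hγR : ∀ᶠ ν in atTop, ∀ j, γ ν j ≤ R * ν)
    (i : Fin n) (hi : 0 < (i : ℕ)) (hK : ∀ᶠ ν in atTop, γ ν ⟨0, i.pos⟩ ≤ K) :
    Tendsto (fun ν => γ ν i) atTop atTop := by
  set z : Fin n := ⟨0, i.pos⟩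
  obtain ⟨ν₀, hKν₀, hposν₀⟩ := (hK.and hpos).exists
  have hK0 : 0 < K := (hposν₀ z).trans_le hKν₀
  have hlow : ∀ᶠ ν in atTop, b / 2 / ((1 + K) * (1 + R) ^ (n - 2)) * ν ≤ 1 + γ ν i := by
    filter_upwards [hpos, hK, hγR, hone.eventually (lt_mem_nhds (half_lt_self hb)),
      eventually_ge_atTop 1] with ν hpos hK hγR hX hν
    have hprod := prod_le_mul_mul_pow (f := fun j => 1 + γ ν j) (r := (1 + R) * ν)
      (fun j => by linarith [hpos j]) (fun j => by nlinarith [hγR j])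
      (Fin.ne_of_val_ne (by simp only [z]; omega) : z ≠ i)
    rw [Fintype.card_fin, mul_pow] at hprod
    have hpow : ν ^ (n - 1) = ν * ν ^ (n - 2) := by
      rw [← pow_succ']
      congr 1
      omega
    rw [lt_div_iff₀ (by positivity), hpow] at hX
    rw [div_mul_eq_mul_div, div_le_iff₀ (by positivity)]
    refine le_of_mul_le_mul_right ?_ (by positivity : 0 < ν ^ (n - 2))
    calc b / 2 * ν * ν ^ (n - 2) ≤ ∏ j, (1 + γ ν j) := by rw [mul_assoc]; exact hX.le
      _ ≤ (1 + γ ν z) * (1 + γ ν i) * ((1 + R) ^ (n - 2) * ν ^ (n - 2)) := hprod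
      _ ≤ (1 + K) * (1 + γ ν i) * ((1 + R) ^ (n - 2) * ν ^ (n - 2)) := by
          have := hpos i
          gcongr
      _ = (1 + γ ν i) * ((1 + K) * (1 + R) ^ (n - 2)) * ν ^ (n - 2) := by ring
  refine (tendsto_atTop_mono' _ hlow ?_).atTop_of_const_add 1
  exact tendsto_id.const_mul_atTop (by positivity)

end Asymptotics

theorem tendsto_mul_sum_inv {α : Type*} {l : Filter α} {n : ℕ} {γ : α → Fin n → ℝ} (h0 : 0 < n)
    (hpos : ∀ᶠ ν in l, ∀ j, 0 < γ ν j) {K : ℝ} (hK : ∀ᶠ ν in l, γ ν ⟨0, h0⟩ ≤ K)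
    (htop : ∀ i : Fin n, 0 < (i : ℕ) → Tendsto (fun ν => γ ν i) l atTop) :
    Tendsto (fun ν => γ ν ⟨0, h0⟩ * ∑ j, (γ ν j)⁻¹) l (𝓝 1) ∧
      ∀ i : Fin n, 0 < (i : ℕ) → Tendsto (fun ν => γ ν i * ∑ j, (γ ν j)⁻¹) l atTop := by
  set z : Fin n := ⟨0, h0⟩
  have hterm : ∀ j, Tendsto (fun ν => γ ν z * (γ ν j)⁻¹) l (𝓝 (if j = z then 1 else 0)) := by
    intro j
    split_ifs with hj
    · subst hj
      refine tendsto_const_nhds.congr' ?_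
      filter_upwards [hpos] with ν hν
      exact (mul_inv_cancel₀ (hν z).ne').symm
    · have hj0 : 0 < (j : ℕ) := Nat.pos_of_ne_zero fun h => hj (Fin.ext h)
      have hK0 := ((htop j hj0).inv_tendsto_atTop).const_mul K
      rw [mul_zero] at hK0
      refine tendsto_of_tendsto_of_tendsto_of_le_of_le' tendsto_const_nhds hK0 ?_ ?_
      · filter_upwards [hpos] with ν hν
        exact mul_nonneg (hν z).le (inv_nonneg.2 (hν j).le)
      · filter_upwards [hpos, hK] with ν hν hK
        exact mul_le_mul_of_nonneg_right hK (inv_nonneg.2 (hν j).le)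
  refine ⟨?_, fun i hi => ?_⟩
  · simpa [mul_sum] using tendsto_finsetSum univ fun j _ => hterm j
  · have hK1 : 0 < max K 1 := lt_max_of_lt_right one_pos
    refine tendsto_atTop_mono' l ?_ ((htop i hi).atTop_mul_const (inv_pos.2 hK1))
    filter_upwards [hpos, hK] with ν hν hK
    gcongr
    · exact (hν i).le
    · calc (max K 1)⁻¹ ≤ (γ ν z)⁻¹ := inv_anti₀ (hν z) (hK.trans (le_max_left K 1))
        _ ≤ ∑ j, (γ ν j)⁻¹ := single_le_sum (fun j _ => inv_nonneg.2 (hν j).le) (mem_univ z)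

theorem spectrum_smul_add_asymptotics {n : ℕ} {C D : Matrix (Fin n) (Fin n) ℝ} {i₀ : Fin n}
    (hC : C i₀ = 0) (hminor : 0 < (updateRow C i₀ (Pi.single i₀ 1)).det) {γ : ℝ → Fin n → ℝ}
    (hγ : ∀ᶠ ν in atTop, StrictMono (γ ν) ∧ (∀ j, 0 < γ ν j) ∧
      Set.range (γ ν) ⊆ spectrum ℝ (ν • C + D)) :
    (∃ K, ∀ᶠ ν in atTop, γ ν ⟨0, i₀.pos⟩ ≤ K) ∧
      ∀ i : Fin n, 0 < (i : ℕ) → Tendsto (fun ν => γ ν i) atTop atTop := by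
  have hdet (t : ℝ) : Tendsto (fun ν => (∏ j, (t + γ ν j)) / ν ^ (n - 1)) atTop
      (𝓝 (updateRow C i₀ ((t • 1 + D) i₀)).det) := by
    refine (tendsto_det_smul_add_div_pow (D := t • 1 + D) hC).congr' ?_
    filter_upwards [hγ] with ν hν
    rw [Fintype.card_fin, add_left_comm, det_smul_one_add_eq_prod hν.1.injective hν.2.2]
  have hone := hdet 1
  have hzero := hdet 0
  simp only [one_smul, zero_smul, zero_add] at hone hzero
  have hdiff := hone.sub hzero
  simp only [← sub_div, det_updateRow_one_add, add_sub_cancel_right] at hdiff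
  obtain ⟨R, hR0, hR⟩ := exists_le_mul_of_mem_spectrum_smul_add C D
  have hγR : ∀ᶠ ν in atTop, ∀ j, γ ν j ≤ R * ν := by
    filter_upwards [hγ, eventually_ge_atTop 1] with ν hν hν1 j
    exact hR ν hν1 _ (hν.2.2 ⟨j, rfl⟩)
  obtain ⟨K, hK⟩ := exists_eventually_le_of_tendsto_prod i₀.pos
    (hγ.mono fun ν h => ⟨h.1.monotone, h.2.1⟩) hminor hdiff hone
  have hb := hminor.trans_le <| le_of_tendsto_of_tendsto hdiff hone <| by
    filter_upwards [hγ, eventually_gt_atTop 0] with ν hν hν0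
    exact div_le_div_of_nonneg_right (sub_le_self _ (prod_nonneg fun j _ => (hν.2.1 j).le))
      (by positivity)
  exact ⟨⟨K, hK⟩, fun i hi =>
    tendsto_atTop_of_tendsto_prod (hγ.mono fun ν h => h.2.1) hb hone hR0 hγR i hi hK⟩

noncomputable def bipAbsorbMatSlope (L₁ L₂ l₂ : ℕ) : Matrix (Fin (L₁ + l₂)) (Fin (L₁ + l₂)) ℝ :=
  bipAbsorbMat L₁ L₂ l₂ 1 - bipAbsorbMat L₁ L₂ l₂ 0

section Bipartite

variable {L₁ L₂ l₂ : ℕ}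

theorem bipAbsorbMat_eq_smul_add (ν : ℝ) :
    bipAbsorbMat L₁ L₂ l₂ ν
      = ν • bipAbsorbMatSlope L₁ L₂ l₂ + bipAbsorbMat L₁ L₂ l₂ 0 := by
  ext i j
  simp only [bipAbsorbMatSlope, bipAbsorbMat, of_apply, Matrix.add_apply, Matrix.smul_apply,
    Matrix.sub_apply, smul_eq_mul]
  split_ifs <;> ring

theorem bipAbsorbMatSlope_row_zero (hL₁ : 0 < L₁) :
    bipAbsorbMatSlope L₁ L₂ l₂ ⟨0, by omega⟩ = 0 := by
  ext j
  have hs : ((0 : ℕ) - (L₁ : ℤ)).natAbs = L₁ := by omega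
  simp only [bipAbsorbMatSlope, bipAbsorbMat, Matrix.sub_apply, of_apply, hs, Pi.zero_apply]
  split_ifs <;> first | (exfalso; omega) | ring

/- Indices `< L₁` are the negative states: they form a lower triangular diagonal block, and the
nonnegative states an upper triangular one. -/
theorem bipAbsorbMatSlope_minor_apply_eq_zero (hL₁ : 0 < L₁) {i j : Fin (L₁ + l₂)}
    (hij : (i : ℕ) < L₁ ∧ (i : ℕ) < j ∨ L₁ ≤ (j : ℕ) ∧ (j : ℕ) < i) :
    updateRow (bipAbsorbMatSlope L₁ L₂ l₂) ⟨0, by omega⟩ (Pi.single ⟨0, by omega⟩ 1) i j = 0 := by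
  rcases eq_or_ne i ⟨0, by omega⟩ with rfl | hi
  · rw [updateRow_self, Pi.single_apply, if_neg]
    intro h
    subst h
    omega
  · rw [updateRow_ne hi]
    have hi' : (i : ℕ) ≠ 0 := fun h => hi (Fin.ext h)
    simp only [bipAbsorbMatSlope, bipAbsorbMat, Matrix.sub_apply, of_apply]
    split_ifs <;> first | (exfalso; omega) | ring

theorem bipAbsorbMatSlope_minor_apply_self_pos (hL₁ : 0 < L₁) (hl₂L₂ : l₂ ≤ L₂)
    (i : Fin (L₁ + l₂)) :
    0 < updateRow (bipAbsorbMatSlope L₁ L₂ l₂) ⟨0, by omega⟩ (Pi.single ⟨0, by omega⟩ 1) i i := by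
  rcases eq_or_ne i ⟨0, by omega⟩ with rfl | hi
  · simp
  · rw [updateRow_ne hi]
    have hi' : (i : ℕ) ≠ 0 := fun h => hi (Fin.ext h)
    have := i.isLt
    simp only [bipAbsorbMatSlope, bipAbsorbMat, Matrix.sub_apply, of_apply]
    split_ifs with hneg hzero
    · have hs : (((i : ℕ) : ℤ) - L₁).natAbs = L₁ - (i : ℕ) := by omega
      have : (1 : ℝ) ≤ (i : ℕ) := by exact_mod_cast Nat.one_le_iff_ne_zero.2 hi'
      rw [hs, Nat.cast_sub (by omega)]
      linarith
    · have : (1 : ℝ) ≤ L₁ := by exact_mod_cast hL₁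
      linarith
    · have : ((((i : ℕ) : ℤ) - L₁ : ℤ) : ℝ) + 1 ≤ L₂ := by
        exact_mod_cast (by omega : ((i : ℕ) : ℤ) - L₁ + 1 ≤ L₂)
      linarith

theorem bipAbsorbMatSlope_minor_det_pos (hL₁ : 0 < L₁) (hl₂L₂ : l₂ ≤ L₂) :
    0 < (updateRow (bipAbsorbMatSlope L₁ L₂ l₂) ⟨0, by omega⟩ (Pi.single ⟨0, by omega⟩ 1)).det := by
  set U := updateRow (bipAbsorbMatSlope L₁ L₂ l₂) ⟨0, by omega⟩ (Pi.single ⟨0, by omega⟩ 1)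
  have hzero {i j : Fin (L₁ + l₂)} :=
    bipAbsorbMatSlope_minor_apply_eq_zero (L₂ := L₂) hL₁ (i := i) (j := j)
  rw [twoBlockTriangular_det' U (fun i => (i : ℕ) < L₁) fun i hi j hj =>
    hzero (Or.inl ⟨hi, by omega⟩)]
  refine mul_pos ?_ ?_
  · rw [det_of_isLowerTriangular (U.toSquareBlockProp _) fun i j hij => hzero (Or.inl ⟨i.2, hij⟩)]
    exact Finset.prod_pos fun i _ => bipAbsorbMatSlope_minor_apply_self_pos hL₁ hl₂L₂ _
  · rw [det_of_isUpperTriangular (M := U.toSquareBlockProp _) fun i j hij =>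
      hzero (Or.inr ⟨not_lt.1 j.2, hij⟩)]
    exact Finset.prod_pos fun i _ => bipAbsorbMatSlope_minor_apply_self_pos hL₁ hl₂L₂ _

end Bipartite

/-- Let `0 < γ_1(ν) < ⋯ < γ_{L₁+l₂}(ν)` denote the (real, distinct, strictly
positive) eigenvalues of `B(ν)`, for `ν > 0`, and let
`m(ν) := Σ_{j=1}^{L₁+l₂} 1/γ_j(ν)` (the mean transition time
`E T_{−L₁,l₂}(ν)` of the bipartite chain from `−L₁` to the absorbing state
`l₂`).  Then `lim_{ν→∞} γ_1(ν)·m(ν) = 1` and `lim_{ν→∞} γ_i(ν)·m(ν) = ∞` for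
every `i = 2, …, L₁+l₂`. -/
theorem bipAbsorbMat_eigenvalue_meanTransition_limits (L₁ L₂ l₂ : ℕ)
    (hL₁ : 1 ≤ L₁) (hl₂L₂ : l₂ ≤ L₂)
    (γ : ℝ → Fin (L₁ + l₂) → ℝ)
    (hγ : ∀ ν : ℝ, 0 < ν → StrictMono (γ ν) ∧ (∀ i, 0 < γ ν i) ∧
      spectrum ℝ (bipAbsorbMat L₁ L₂ l₂ ν) = Set.range (γ ν)) :
    Tendsto
        (fun ν : ℝ => γ ν ⟨0, by omega⟩ * ∑ j : Fin (L₁ + l₂), (γ ν j)⁻¹)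
        atTop (nhds 1) ∧
      ∀ i : Fin (L₁ + l₂), 0 < (i : ℕ) →
        Tendsto (fun ν : ℝ => γ ν i * ∑ j : Fin (L₁ + l₂), (γ ν j)⁻¹)
          atTop atTop := by
  have hγ' : ∀ᶠ ν in atTop, StrictMono (γ ν) ∧ (∀ j, 0 < γ ν j) ∧
      Set.range (γ ν) ⊆ spectrum ℝ
        (ν • bipAbsorbMatSlope L₁ L₂ l₂ + bipAbsorbMat L₁ L₂ l₂ 0) := by
    filter_upwards [eventually_gt_atTop 0] with ν hν
    obtain ⟨hmono, hpos, hspec⟩ := hγ ν hν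
    exact ⟨hmono, hpos, by rw [← bipAbsorbMat_eq_smul_add, hspec]⟩
  obtain ⟨⟨K, hK⟩, htop⟩ := spectrum_smul_add_asymptotics
    (bipAbsorbMatSlope_row_zero hL₁) (bipAbsorbMatSlope_minor_det_pos hL₁ hl₂L₂) hγ'
  exact tendsto_mul_sum_inv _ (hγ'.mono fun ν h => h.2.1) hK htop
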